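/- Let G be a finite abelian group with nondegenerate symmetric Z/2-valued pairing b, and let q(s) = arf(Ω_s) ∈ {±1} as above. Then q is a quadratic refinement of the pairing in the sense that q(s+x+y)·q(s) / (q(s+x)·q(s+y)) = (-1)^{b(x,y)} for all x, y ∈ G and any base point s. -/

import Mathlib

/-!
Write `S = ∑ Ω` and `β_u = (-1)^{b(u, ·)}`. Since `Ω(u + z) = Ω u · Ω z · β_u(z)` and `Ω² = 1`,
twisting `Ω` by the character `β_u` multiplies its Gauss sum by `Ω u`, so `q(s + u) = Ω(u) · q(s)`;
hence the ratio in question is `Ω(x + y) / (Ω x · Ω y) = (-1)^{b(x,y)}`, provided `q(s) ≠ 0`.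
That holds because `S² = |G|`: expanding `S²` and collecting the terms
`Ω(y + x) Ω(x) = Ω(y) β_y(x)` leaves character sums `∑ₓ β_y(x)`, which vanish for `y ≠ 0` by
nondegeneracy.
-/

noncomputable def arf {G : Type*} [Fintype G] (Ω : G → ℝ) : ℝ :=
  (Real.sqrt (Fintype.card G))⁻¹ * ∑ x, Ω x

open Finset

def ZMod.signAddChar (R : Type*) [Ring R] : AddChar (ZMod 2) R where
  toFun a := (-1) ^ a.val
  map_zero_eq_one' := by simp
  map_add_eq_mul' a c := by
    rw [← pow_add, ZMod.val_add, ← neg_one_pow_eq_pow_mod_two]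

@[simp]
lemma ZMod.signAddChar_apply (R : Type*) [Ring R] (a : ZMod 2) :
    ZMod.signAddChar R a = (-1) ^ a.val := rfl

lemma ZMod.signAddChar_eq_one_iff {R : Type*} [Ring R] (hR : (-1 : R) ≠ 1) {a : ZMod 2} :
    ZMod.signAddChar R a = 1 ↔ a = 0 := by
  rw [ZMod.signAddChar_apply, neg_one_pow_eq_one_iff_even hR, ← ZMod.natCast_eq_zero_iff_even,
    ZMod.natCast_zmod_val]

section QuadraticRefinement

variable {G R : Type*} [AddCommGroup G] [Fintype G] [CommRing R]
  {Ω : G → R} {β : G → AddChar G R}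

lemma sum_mul_addChar_eq (hsq : ∀ x, Ω x ^ 2 = 1)
    (hquad : ∀ x y, Ω (x + y) = Ω x * Ω y * β x y) (u : G) :
    ∑ z, Ω z * β u z = Ω u * ∑ z, Ω z := by
  have hterm (z : G) : Ω z * β u z = Ω u * Ω (u + z) := by
    linear_combination (-(Ω z * β u z)) * hsq u + Ω u * (hquad u z).symm
  rw [Fintype.sum_congr _ _ hterm, ← mul_sum]
  exact congrArg (Ω u * ·) (Equiv.sum_comp (Equiv.addLeft u) Ω)

lemma sum_sq_eq_card [IsDomain R] (hsq : ∀ x, Ω x ^ 2 = 1)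
    (hquad : ∀ x y, Ω (x + y) = Ω x * Ω y * β x y) (hβ : ∀ y, β y = 0 → y = 0) :
    (∑ z, Ω z) ^ 2 = Fintype.card G := by
  classical
  have hinner (y : G) : ∑ x, Ω (y + x) * Ω x = if y = 0 then (Fintype.card G : R) else 0 := by
    split_ifs with hy
    · simp [hy, ← sq, hsq]
    · have hterm (x : G) : Ω (y + x) * Ω x = Ω y * β y x := by
        linear_combination (Ω y * β y x) * hsq x + Ω x * hquad y x
      rw [Fintype.sum_congr _ _ hterm, ← mul_sum,
        AddChar.sum_eq_ite, if_neg (mt (hβ y) hy), mul_zero]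
  calc (∑ z, Ω z) ^ 2 = ∑ x, ∑ y, Ω (y + x) * Ω x := by
        rw [sq, sum_mul_sum, sum_comm]
        refine sum_congr rfl fun x _ => ?_
        simp_rw [← sum_mul]
        exact congrArg (· * Ω x) (Fintype.sum_equiv (Equiv.addRight x) _ _ fun _ => rfl).symm
    _ = Fintype.card G := by rw [sum_comm, Fintype.sum_congr _ _ hinner, sum_ite_eq' univ]; simp

end QuadraticRefinement

section Arf

variable {G : Type*} [AddCommGroup G] [Fintype G] {Ω : G → ℝ} {β : G → AddChar G ℝ}

lemma arf_mul_addChar (hsq : ∀ x, Ω x ^ 2 = 1)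
    (hquad : ∀ x y, Ω (x + y) = Ω x * Ω y * β x y) (u : G) :
    arf (fun z => Ω z * β u z) = Ω u * arf Ω := by
  rw [arf, arf, sum_mul_addChar_eq hsq hquad, mul_left_comm]

lemma arf_sq_eq_one (hsq : ∀ x, Ω x ^ 2 = 1)
    (hquad : ∀ x y, Ω (x + y) = Ω x * Ω y * β x y) (hβ : ∀ y, β y = 0 → y = 0) :
    arf Ω ^ 2 = 1 := by
  rw [arf, mul_pow, sum_sq_eq_card hsq hquad hβ, inv_pow, Real.sq_sqrt (Nat.cast_nonneg _)]
  exact inv_mul_cancel₀ (Nat.cast_ne_zero.mpr Fintype.card_ne_zero)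

lemma arf_quadratic_refinement_of_addChar (hsq : ∀ x, Ω x ^ 2 = 1)
    (hquad : ∀ x y, Ω (x + y) = Ω x * Ω y * β x y) (hβ : ∀ y, β y = 0 → y = 0) (x y : G) :
    arf (fun z => Ω z * β (x + y) z) * arf Ω /
        (arf (fun z => Ω z * β x z) * arf (fun z => Ω z * β y z)) = β x y := by
  have harf : arf Ω ≠ 0 := by
    intro h
    simpa [h] using arf_sq_eq_one hsq hquad hβ
  have hΩ (z : G) : Ω z ≠ 0 := by
    intro h
    simpa [h] using hsq z
  simp only [arf_mul_addChar hsq hquad, hquad x y]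
  field_simp [hΩ x, hΩ y]

end Arf

theorem arf_quadratic_refinement_general {G : Type*} [AddCommGroup G] [Fintype G]
    (b : G → G → ZMod 2)
    (hbadd₂ : ∀ x y z, b x (y + z) = b x y + b x z)
    (hbnd : ∀ x, (∀ y, b x y = 0) → x = 0)
    (Ω : G → ℝ)
    (hval : ∀ x, Ω x = 1 ∨ Ω x = -1)
    (hquad : ∀ x y, Ω (x + y) = Ω x * Ω y * (-1 : ℝ) ^ (b x y).val)
    (x y : G) :
    arf (fun z => Ω z * (-1 : ℝ) ^ (b (x + y) z).val) * arf Ω /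
        (arf (fun z => Ω z * (-1 : ℝ) ^ (b x z).val) *
          arf (fun z => Ω z * (-1 : ℝ) ^ (b y z).val))
      = (-1 : ℝ) ^ (b x y).val := by
  let β (u : G) : AddChar G ℝ :=
    (ZMod.signAddChar ℝ).compAddMonoidHom (AddMonoidHom.mk' (b u) (hbadd₂ u))
  have hsq (z : G) : Ω z ^ 2 = 1 := sq_eq_one_iff.mpr (hval z)
  have hβ (u : G) (hu : β u = 0) : u = 0 := hbnd u fun z =>
    (ZMod.signAddChar_eq_one_iff (by norm_num)).mp (AddChar.eq_zero_iff.mp hu z)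
  exact arf_quadratic_refinement_of_addChar (β := β) hsq hquad hβ x y

/-- Let `G` be a finite abelian group with nondegenerate symmetric
`ℤ/2`-valued pairing `b`, `{Ω_s}` the torsor of `{±1}`-valued quadratic refinements of
`(-1)^b` (with `x ∈ G` acting by `Ω_{s+x}(y) = Ω_s(y)(-1)^{b(x,y)}`), and
`q(s) = arf(Ω_s)`.  Then `q` is a quadratic refinement of the pairing:
`q(s+x+y)·q(s) / (q(s+x)·q(s+y)) = (-1)^{b(x,y)}` for all `x, y ∈ G`. -/
theorem arf_quadratic_refinement {G : Type*} [AddCommGroup G] [Fintype G]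
    (b : G → G → ZMod 2)
    (hbadd₁ : ∀ x y z, b (x + y) z = b x z + b y z)
    (hbadd₂ : ∀ x y z, b x (y + z) = b x y + b x z)
    (hbsymm : ∀ x y, b x y = b y x)
    (hbnd : ∀ x, (∀ y, b x y = 0) → x = 0)
    (Ω : G → ℝ)
    (hval : ∀ x, Ω x = 1 ∨ Ω x = -1)
    (hquad : ∀ x y, Ω (x + y) = Ω x * Ω y * (-1 : ℝ) ^ (b x y).val)
    (x y : G) :
    arf (fun z => Ω z * (-1 : ℝ) ^ (b (x + y) z).val) * arf Ω /
        (arf (fun z => Ω z * (-1 : ℝ) ^ (b x z).val) *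
          arf (fun z => Ω z * (-1 : ℝ) ^ (b y z).val))
      = (-1 : ℝ) ^ (b x y).val :=
  arf_quadratic_refinement_general b hbadd₂ hbnd Ω hval hquad x y
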